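/- For all integers d ≥ 1 and all integers k, the Eulerian numbers satisfy the two-scale equation A_{d,k} = Σ_{j=0}^{d+1} 2^{-d} · C(d+1,j) · A_{d,2k-j}, where A_{d,m} := d!·B_{d+1}(m) (which is the usual Eulerian number for 1 ≤ m ≤ d and zero otherwise). -/

import Mathlib

/-!
Write `x₊ᵈ` for the truncated power (`truncPow d`, the Heaviside function when `d = 0`) and let
polynomials act on functions `ℝ → ℝ` through the shift `f ↦ f (· - 1)`. Integrating over `[0, 1]`
commutes with the shift and sends `x₊ᵈ` to `∇ x₊ᵈ⁺¹ / (d + 1)` with `∇ = 1 - X`, so by induction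
`d! • B (d + 1) = (1 - X)ᵈ⁺¹ x₊ᵈ`. Hence `∑ⱼ C(d+1, j) d! B (d + 1) (2x - j)` is
`(1 + X)ᵈ⁺¹ (1 - X)ᵈ⁺¹ = (1 - X²)ᵈ⁺¹` applied to `x₊ᵈ` at `2x`. A polynomial in `X²` evaluated
at `2x` is the same polynomial in `X` applied to `x₊ᵈ (2 ·) = 2ᵈ x₊ᵈ` at `x`, which gives
`2ᵈ d! B (d + 1) x`.
-/

open MeasureTheory

/-- B-splines: `B 1` is the indicator of `[0,1)`, and `B d x = ∫_0^1 B (d-1) (x - t) dt`. -/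
noncomputable def B : ℕ → ℝ → ℝ
  | 0, _ => 0
  | 1, x => if 0 ≤ x ∧ x < 1 then 1 else 0
  | d + 2, x => ∫ t in (0:ℝ)..(1:ℝ), B (d + 1) (x - t)

open Polynomial Finset Set
open scoped Nat

noncomputable def shift : Module.End ℝ (ℝ → ℝ) := LinearMap.funLeft ℝ ℝ (· - 1)

@[simp]
lemma shift_apply (f : ℝ → ℝ) (x : ℝ) : shift f x = f (x - 1) := rfl

lemma shift_pow_apply (n : ℕ) (f : ℝ → ℝ) (x : ℝ) : (shift ^ n) f x = f (x - n) := by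
  induction n generalizing x with
  | zero => simp
  | succ n ih =>
    rw [pow_succ', Module.End.mul_apply, shift_apply, ih, Nat.cast_succ, sub_sub, add_comm]

lemma aeval_shift_apply' (p : ℝ[X]) {n : ℕ} (hn : p.natDegree < n) (f : ℝ → ℝ) (x : ℝ) :
    aeval shift p f x = ∑ i ∈ range n, p.coeff i * f (x - i) := by
  simp [aeval_eq_sum_range' hn, LinearMap.sum_apply, Finset.sum_apply, shift_pow_apply]

lemma aeval_shift_apply (p : ℝ[X]) (f : ℝ → ℝ) (x : ℝ) :
    aeval shift p f x = ∑ i ∈ range (p.natDegree + 1), p.coeff i * f (x - i) :=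
  aeval_shift_apply' p (Nat.lt_succ_self _) f x

lemma aeval_shift_one_sub_X_apply (f : ℝ → ℝ) (x : ℝ) :
    aeval shift (1 - X : ℝ[X]) f x = f x - f (x - 1) := by
  simp

lemma aeval_shift_expand_apply (p : ℝ[X]) (f : ℝ → ℝ) (x : ℝ) :
    aeval shift (expand ℝ 2 p) f (2 * x) = aeval shift p (fun y => f (2 * y)) x := by
  induction p using Polynomial.induction_on' with
  | add p q hp hq =>
    simp only [map_add, LinearMap.add_apply, Pi.add_apply, hp, hq]
  | monomial n a =>
    rw [← C_mul_X_pow_eq_monomial, map_mul, map_pow, expand_C, expand_X, ← pow_mul]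
    simp only [map_mul, aeval_C, aeval_X_pow, Module.End.mul_apply, Module.algebraMap_end_apply,
      Pi.smul_apply, smul_eq_mul, shift_pow_apply]
    push_cast
    ring_nf

lemma integral_aeval_shift (p : ℝ[X]) {f : ℝ → ℝ} (hf : LocallyIntegrable f) (x : ℝ) :
    ∫ t in (0:ℝ)..1, aeval shift p f (x - t) =
      aeval shift p (fun y => ∫ t in (0:ℝ)..1, f (y - t)) x := by
  have hint (c : ℝ) : IntervalIntegrable (fun t => f (c - t)) volume 0 1 := by
    simpa using ((hf.integrableOn_isCompact isCompact_uIcc).intervalIntegrable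
      (a := c) (b := c - 1)).comp_sub_left c
  simp_rw [aeval_shift_apply p]
  rw [intervalIntegral.integral_finsetSum]
  · simp_rw [intervalIntegral.integral_const_mul, sub_right_comm x]
  · intro i _
    simpa only [sub_right_comm x] using (hint (x - i)).const_mul (p.coeff i)

noncomputable def truncPow (n : ℕ) : ℝ → ℝ := (Set.Ici 0).indicator (· ^ n)

lemma truncPow_of_nonneg {n : ℕ} {x : ℝ} (hx : 0 ≤ x) : truncPow n x = x ^ n :=
  indicator_of_mem hx _

lemma truncPow_of_neg {n : ℕ} {x : ℝ} (hx : x < 0) : truncPow n x = 0 :=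
  indicator_of_notMem (not_le.2 hx) _

lemma truncPow_nonneg (n : ℕ) (x : ℝ) : 0 ≤ truncPow n x := by
  rcases le_or_gt 0 x with hx | hx
  · rw [truncPow_of_nonneg hx]; positivity
  · rw [truncPow_of_neg hx]

lemma truncPow_monotone (n : ℕ) : Monotone (truncPow n) := by
  intro x y hxy
  rcases lt_or_ge x 0 with hx | hx
  · rw [truncPow_of_neg hx]; exact truncPow_nonneg n y
  · rw [truncPow_of_nonneg hx, truncPow_of_nonneg (hx.trans hxy)]
    exact pow_le_pow_left₀ hx hxy n

lemma truncPow_succ_eq_max_pow (n : ℕ) (x : ℝ) : truncPow (n + 1) x = max x 0 ^ (n + 1) := by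
  rcases lt_or_ge x 0 with hx | hx
  · rw [truncPow_of_neg hx, max_eq_right hx.le, zero_pow n.succ_ne_zero]
  · rw [truncPow_of_nonneg hx, max_eq_left hx]

lemma continuous_truncPow_succ (n : ℕ) : Continuous (truncPow (n + 1)) := by
  simp_rw [funext (truncPow_succ_eq_max_pow n)]
  fun_prop

lemma truncPow_two_mul (n : ℕ) (x : ℝ) : truncPow n (2 * x) = 2 ^ n * truncPow n x := by
  rcases lt_or_ge x 0 with hx | hx
  · rw [truncPow_of_neg hx, truncPow_of_neg (by linarith), mul_zero]
  · rw [truncPow_of_nonneg hx, truncPow_of_nonneg (by linarith), mul_pow]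

lemma hasDerivWithinAt_truncPow_succ (n : ℕ) (x : ℝ) :
    HasDerivWithinAt (truncPow (n + 1)) ((n + 1) * truncPow n x) (Ioi x) x := by
  rcases lt_or_ge x 0 with hx | hx
  · rw [truncPow_of_neg hx, mul_zero]
    refine ((hasDerivAt_const x 0).congr_of_eventuallyEq ?_).hasDerivWithinAt
    filter_upwards [Iio_mem_nhds hx] with y hy using truncPow_of_neg hy
  · have hpow : HasDerivAt (· ^ (n + 1)) ((n + 1) * x ^ n) x := by
      simpa using hasDerivAt_pow (n + 1) x
    rw [truncPow_of_nonneg hx]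
    exact hpow.hasDerivWithinAt.congr (fun y hy => truncPow_of_nonneg (hx.trans hy.le))
      (truncPow_of_nonneg hx)

lemma integral_truncPow (n : ℕ) (a b : ℝ) :
    ∫ u in a..b, truncPow n u = (truncPow (n + 1) b - truncPow (n + 1) a) / (n + 1) := by
  rw [eq_div_iff (by positivity), mul_comm, ← intervalIntegral.integral_const_mul]
  exact intervalIntegral.integral_eq_sub_of_hasDeriv_right
    (continuous_truncPow_succ n).continuousOn
    (fun x _ => hasDerivWithinAt_truncPow_succ n x)
    ((truncPow_monotone n).intervalIntegrable.const_mul _)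

lemma integral_truncPow_comp_sub (n : ℕ) :
    (fun x => ∫ t in (0:ℝ)..1, truncPow n (x - t)) =
      ((n : ℝ) + 1)⁻¹ • aeval shift (1 - X : ℝ[X]) (truncPow (n + 1)) := by
  ext x
  rw [intervalIntegral.integral_comp_sub_left, integral_truncPow, sub_zero, Pi.smul_apply,
    aeval_shift_one_sub_X_apply, smul_eq_mul, div_eq_inv_mul]

lemma factorial_smul_B (d : ℕ) :
    (d ! : ℝ) • B (d + 1) = aeval shift ((1 - X : ℝ[X]) ^ (d + 1)) (truncPow d) := by
  induction d with
  | zero =>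
    ext x
    rw [zero_add, pow_one, aeval_shift_one_sub_X_apply, Nat.factorial_zero, Nat.cast_one, one_smul]
    simp only [B, truncPow, Set.indicator_apply, Set.mem_Ici, sub_nonneg, pow_zero]
    split_ifs <;> grind
  | succ d ih =>
    ext x
    have hB : B (d + 2) x = ∫ t in (0:ℝ)..1, B (d + 1) (x - t) := rfl
    calc ((d + 1) ! : ℝ) • B (d + 1 + 1) x
        = (d + 1) * ∫ t in (0:ℝ)..1, ((d ! : ℝ) • B (d + 1)) (x - t) := by
          simp only [Nat.factorial_succ, hB, Pi.smul_apply, smul_eq_mul,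
            intervalIntegral.integral_const_mul]
          push_cast
          ring
      _ = (d + 1) * aeval shift ((1 - X : ℝ[X]) ^ (d + 1))
            (((d : ℝ) + 1)⁻¹ • aeval shift (1 - X : ℝ[X]) (truncPow (d + 1))) x := by
          rw [ih, integral_aeval_shift _ (truncPow_monotone d).locallyIntegrable,
            integral_truncPow_comp_sub]
      _ = aeval shift ((1 - X : ℝ[X]) ^ (d + 1 + 1)) (truncPow (d + 1)) x := by
          rw [map_smul, Pi.smul_apply, smul_eq_mul, ← mul_assoc, mul_inv_cancel₀ (by positivity),
            one_mul, pow_succ (1 - X : ℝ[X]) (d + 1), map_mul, Module.End.mul_apply]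

lemma one_add_X_pow_mul_one_sub_X_pow (n : ℕ) :
    (1 + X : ℝ[X]) ^ n * (1 - X) ^ n = expand ℝ 2 ((1 - X) ^ n) := by
  rw [← mul_pow, map_pow, map_sub, map_one, expand_X]
  ring

lemma two_pow_mul_B (d : ℕ) (x : ℝ) :
    2 ^ d * B (d + 1) x =
      ∑ j ∈ range (d + 2), ((d + 1).choose j : ℝ) * B (d + 1) (2 * x - j) := by
  have hdeg : ((1 + X : ℝ[X]) ^ (d + 1)).natDegree < d + 2 := by
    compute_degree!
  have key : (d ! : ℝ) * (2 ^ d * B (d + 1) x) =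
      aeval shift ((1 + X : ℝ[X]) ^ (d + 1)) ((d ! : ℝ) • B (d + 1)) (2 * x) := by
    have hdil : (fun y => truncPow d (2 * y)) = (2 : ℝ) ^ d • truncPow d :=
      funext (truncPow_two_mul d)
    rw [factorial_smul_B, ← Module.End.mul_apply, ← map_mul, one_add_X_pow_mul_one_sub_X_pow,
      aeval_shift_expand_apply, hdil, map_smul, Pi.smul_apply, ← factorial_smul_B]
    simp only [Pi.smul_apply, smul_eq_mul]
    ring
  rw [aeval_shift_apply' _ hdeg] at key
  simp only [coeff_one_add_X_pow, Pi.smul_apply, smul_eq_mul] at key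
  simp_rw [mul_left_comm _ (d ! : ℝ), ← Finset.mul_sum] at key
  exact mul_left_cancel₀ (by positivity) key

theorem eulerian_two_scale_general (d : ℕ) (k : ℤ) :
    (Nat.factorial d : ℝ) * B (d + 1) (k : ℝ) =
      ∑ j ∈ Finset.range (d + 2),
        (2 : ℝ) ^ (-(d : ℤ)) * ((d + 1).choose j : ℝ) *
          ((Nat.factorial d : ℝ) * B (d + 1) ((2 * k - j : ℤ) : ℝ)) := by
  have h2 : (2 : ℝ) ^ (-(d : ℤ)) * 2 ^ d = 1 := by
    rw [zpow_neg, zpow_natCast, inv_mul_cancel₀ (by positivity)]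
  calc (d ! : ℝ) * B (d + 1) k = (2 : ℝ) ^ (-(d : ℤ)) * d ! * (2 ^ d * B (d + 1) k) := by
        linear_combination (-(d ! : ℝ) * B (d + 1) k) * h2
    _ = _ := by
        rw [two_pow_mul_B, Finset.mul_sum]
        refine Finset.sum_congr rfl fun j _ => ?_
        push_cast
        ring

theorem eulerian_two_scale (d : ℕ) (hd : 1 ≤ d) (k : ℤ) :
    (Nat.factorial d : ℝ) * B (d + 1) (k : ℝ) =
      ∑ j ∈ Finset.range (d + 2),
        (2 : ℝ) ^ (-(d : ℤ)) * ((d + 1).choose j : ℝ) *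
          ((Nat.factorial d : ℝ) * B (d + 1) ((2 * k - j : ℤ) : ℝ)) :=
  eulerian_two_scale_general d k
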